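/- For a line network of length L in which every link is the same packet erasure channel with erasure probability ε, the batched-code capacity with batch size M and inner block-length N satisfies C_L(M,N) ≤ ((1−ε^N)^L / N) · min{ M·log|𝒜| , N·log|𝒬ₒ| }. -/

import Mathlib

open scoped BigOperators

def IsDist {α : Type*} [Fintype α] (p : α → ℝ) : Prop :=
  (∀ x, 0 ≤ p x) ∧ ∑ x, p x = 1

def IsStoch {α β : Type*} [Fintype α] [Fintype β] (W : Matrix α β ℝ) : Prop :=
  ∀ x, (∀ y, 0 ≤ W x y) ∧ ∑ y, W x y = 1

/-- Mutual information `I(p, W)` (base-2 logarithm) between the input of channel `W`,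
distributed according to `p`, and the corresponding output. -/
noncomputable def mutualInfo {α β : Type*} [Fintype α] [Fintype β]
    (p : α → ℝ) (W : Matrix α β ℝ) : ℝ :=
  ∑ x, ∑ y, p x * W x y * Real.logb 2 (W x y / ∑ x', p x' * W x' y)

/-- `N`-fold memoryless extension `Q^{⊗N}` of a channel. -/
noncomputable def tensorPow {α β : Type*} [Fintype α] [Fintype β] (N : ℕ)
    (Q : Matrix α β ℝ) : Matrix (Fin N → α) (Fin N → β) ℝ :=
  Matrix.of fun u y => ∏ i, Q (u i) (y i)

/-- `chain Q Φ n = Q 0 * Φ 0 * Q 1 * Φ 1 * ⋯ * Q n`. -/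
noncomputable def chain {β γ : Type*} [Fintype β] [Fintype γ]
    (Q : ℕ → Matrix β γ ℝ) (Φ : ℕ → Matrix γ β ℝ) : ℕ → Matrix β γ ℝ
  | 0 => Q 0
  | (n+1) => chain Q Φ n * Φ n * Q (n+1)

/-- End-to-end transition matrix `W_L = F Q₁^{⊗N} Φ₁ Q₂^{⊗N} ⋯ Φ_{L-1} Q_L^{⊗N}` of a
batched code with batch alphabet `A`, batch size `M`, inner block-length `N`,
over the line network of length `L` whose `ℓ`-th link is the DMC `Q (ℓ-1)` (0-indexed). -/
noncomputable def endToEnd {A Qi Qo : Type*} [Fintype A] [Fintype Qi] [Fintype Qo]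
    (L M N : ℕ)
    (F : Matrix (Fin M → A) (Fin N → Qi) ℝ)
    (Q : ℕ → Matrix Qi Qo ℝ)
    (Φ : ℕ → Matrix (Fin N → Qo) (Fin N → Qi) ℝ) :
    Matrix (Fin M → A) (Fin N → Qo) ℝ :=
  F * chain (fun ℓ => tensorPow N (Q ℓ)) Φ (L - 1)

/-- Shannon capacity of a DMC, as the supremum of mutual information over input
distributions. -/
noncomputable def capacity {α β : Type*} [Fintype α] [Fintype β] (W : Matrix α β ℝ) : ℝ :=
  sSup {I : ℝ | ∃ p : α → ℝ, IsDist p ∧ I = mutualInfo p W}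

/-- The packet erasure channel with packet alphabet `A` and erasure probability `ε`:
input and output alphabets are `Option A` (`none` is the erasure `e`); a packet is
delivered with probability `1 - ε` and erased with probability `ε`, and the input `e`
always yields output `e`. -/
noncomputable def eraCh (A : Type*) [DecidableEq A] (ε : ℝ) :
    Matrix (Option A) (Option A) ℝ :=
  Matrix.of fun x y =>
    match x with
    | none => if y = none then 1 else 0
    | some a => if y = some a then 1 - ε else if y = none then ε else 0

/-!
Whatever its input, the link `Q^{⊗N}` erases all `N` packets with probability at least `ε^N`, so
it is a mixture `(1 - ε^N) • G + R` of a stochastic matrix `G` and a nonnegative matrix `R` with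
identical rows. Such mixtures are stable under multiplication, the weights multiplying, and
stochastic matrices are mixtures of weight `1`; hence `W_L = t • G + R` with `t = (1 - ε^N)^L`.
By the log-sum inequality, mutual information is subadditive and homogeneous in the channel,
and it vanishes on `R`, so `I(p, W_L) ≤ t • I(p, G) ≤ t • min (H(X), H(Y))`.
-/

open Matrix Real

theorem sub_le_mul_log_div {a b : ℝ} (ha : 0 ≤ a) (hb : 0 ≤ b) (hab : b = 0 → a = 0) :
    a - b ≤ a * log (a / b) := by
  rcases ha.eq_or_lt with rfl | ha
  · simpa using hb
  have hb : 0 < b := hb.lt_of_ne fun h => ha.ne' (hab h.symm)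
  have h := one_sub_inv_le_log_of_pos (div_pos ha hb)
  rw [inv_div] at h
  calc a - b = a * (1 - b / a) := by field_simp
    _ ≤ a * log (a / b) := by gcongr

theorem add_mul_log_div_add_le {a₁ a₂ b₁ b₂ : ℝ} (ha₁ : 0 ≤ a₁) (ha₂ : 0 ≤ a₂)
    (hb₁ : 0 ≤ b₁) (hb₂ : 0 ≤ b₂) (h₁ : b₁ = 0 → a₁ = 0) (h₂ : b₂ = 0 → a₂ = 0) :
    (a₁ + a₂) * log ((a₁ + a₂) / (b₁ + b₂)) ≤ a₁ * log (a₁ / b₁) + a₂ * log (a₂ / b₂) := by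
  rcases (add_nonneg ha₁ ha₂).eq_or_lt with ha | ha
  · obtain ⟨rfl, rfl⟩ : a₁ = 0 ∧ a₂ = 0 := ⟨by linarith, by linarith⟩
    simp
  have hb : 0 < b₁ + b₂ := (add_nonneg hb₁ hb₂).lt_of_ne fun hb => by
    have := h₁ (by linarith)
    have := h₂ (by linarith)
    linarith
  set s := (a₁ + a₂) / (b₁ + b₂)
  have hs : 0 < s := div_pos ha hb
  -- Compare each `aᵢ` with `bᵢ * s`; the `bᵢ * s` add up to `a₁ + a₂`.
  have key : ∀ a b : ℝ, 0 ≤ a → 0 ≤ b → (b = 0 → a = 0) →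
      a - b * s ≤ a * log (a / b) - a * log s := by
    intro a b ha hb hab
    have hbs : b * s = 0 → a = 0 := fun h =>
      hab ((mul_eq_zero.1 h).resolve_right hs.ne')
    have split : a * log (a / (b * s)) = a * log (a / b) - a * log s := by
      rcases eq_or_ne a 0 with rfl | ha
      · simp
      rw [← div_div, log_div (div_ne_zero ha fun h => ha (hab h)) hs.ne', mul_sub]
    exact split ▸ sub_le_mul_log_div ha (mul_nonneg hb hs.le) hbs
  have hsum : (b₁ + b₂) * s = a₁ + a₂ := mul_div_cancel₀ _ hb.ne'
  linarith [key a₁ b₁ ha₁ hb₁ h₁, key a₂ b₂ ha₂ hb₂ h₂]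

section

variable {α β γ : Type*}

theorem IsStoch.le_one [Fintype α] [Fintype β] {W : Matrix α β ℝ} (hW : IsStoch W) (x : α)
    (y : β) : W x y ≤ 1 :=
  (hW x).2 ▸ Finset.single_le_sum (fun y _ => (hW x).1 y) (Finset.mem_univ y)

theorem mul_le_vecMul_apply [Fintype α] {p : α → ℝ} {W : Matrix α β ℝ} (hp : ∀ x, 0 ≤ p x)
    (hW : ∀ x y, 0 ≤ W x y) (x : α) (y : β) : p x * W x y ≤ (p ᵥ* W) y :=
  Finset.single_le_sum (f := fun x => p x * W x y) (fun x _ => mul_nonneg (hp x) (hW x y))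
    (Finset.mem_univ x)

theorem vecMul_apply_nonneg [Fintype α] {p : α → ℝ} {W : Matrix α β ℝ} (hp : ∀ x, 0 ≤ p x)
    (hW : ∀ x y, 0 ≤ W x y) (y : β) : 0 ≤ (p ᵥ* W) y :=
  Finset.sum_nonneg fun x _ => mul_nonneg (hp x) (hW x y)

theorem IsDist.vecMul [Fintype α] [Fintype β] {p : α → ℝ} {W : Matrix α β ℝ} (hp : IsDist p)
    (hW : IsStoch W) : IsDist (p ᵥ* W) := by
  refine ⟨vecMul_apply_nonneg hp.1 fun x => (hW x).1, ?_⟩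
  simp only [Matrix.vecMul, dotProduct]
  rw [Finset.sum_comm]
  simp [← Finset.mul_sum, (hW _).2, hp.2]

theorem IsStoch.mul [Fintype α] [Fintype β] [Fintype γ] {W₁ : Matrix α β ℝ} {W₂ : Matrix β γ ℝ}
    (h₁ : IsStoch W₁) (h₂ : IsStoch W₂) : IsStoch (W₁ * W₂) :=
  fun x => IsDist.vecMul (h₁ x) h₂

theorem IsStoch.mul_replicateRow [Fintype α] [Fintype β] {G : Matrix α β ℝ} (hG : IsStoch G)
    (r : γ → ℝ) : G * replicateRow β r = replicateRow α r := by
  ext x y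
  simp [Matrix.mul_apply, replicateRow_apply, ← Finset.sum_mul, (hG x).2]

theorem replicateRow_mul [Fintype β] (r : β → ℝ) (M : Matrix β γ ℝ) :
    replicateRow α r * M = replicateRow α (r ᵥ* M) :=
  rfl

/-- Apart from a `c`-fraction, the output of `W` does not depend on its input; for the erasure
channel the remainder is the all-erased output. -/
def IsConstMixture [Fintype α] [Fintype β] (c : ℝ) (W : Matrix α β ℝ) : Prop :=
  ∃ G : Matrix α β ℝ, ∃ r : β → ℝ, IsStoch G ∧ 0 ≤ r ∧ W = c • G + replicateRow α r

theorem IsStoch.isConstMixture_one [Fintype α] [Fintype β] {W : Matrix α β ℝ}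
    (hW : IsStoch W) : IsConstMixture 1 W :=
  ⟨W, 0, hW, le_rfl, by simp⟩

theorem IsConstMixture.nonneg [Fintype α] [Fintype β] {c : ℝ} {W : Matrix α β ℝ}
    (hW : IsConstMixture c W) (hc : 0 ≤ c) (x : α) (y : β) : 0 ≤ W x y := by
  obtain ⟨G, r, hG, hr, rfl⟩ := hW
  exact add_nonneg (mul_nonneg hc ((hG x).1 y)) (hr y)

theorem IsConstMixture.mul [Fintype α] [Fintype β] [Fintype γ] {a b : ℝ} {X : Matrix α β ℝ}
    {Y : Matrix β γ ℝ} (hX : IsConstMixture a X) (hY : IsConstMixture b Y) (ha : 0 ≤ a)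
    (hb : 0 ≤ b) : IsConstMixture (a * b) (X * Y) := by
  have hY₀ := hY.nonneg hb
  obtain ⟨G₁, r₁, hG₁, hr₁, rfl⟩ := hX
  obtain ⟨G₂, r₂, hG₂, hr₂, hY⟩ := hY
  refine ⟨G₁ * G₂, a • r₂ + r₁ ᵥ* Y, hG₁.mul hG₂,
    add_nonneg (smul_nonneg ha hr₂) (vecMul_apply_nonneg hr₁ hY₀), ?_⟩
  rw [Matrix.add_mul, replicateRow_mul, Matrix.smul_mul, hY, Matrix.mul_add, Matrix.mul_smul,
    hG₁.mul_replicateRow, replicateRow_add, replicateRow_smul, ← hY]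
  module

/-- Doeblin's minorization condition. -/
theorem IsStoch.isConstMixture_of_le_apply [Fintype α] [Fintype β] [DecidableEq β]
    {W : Matrix α β ℝ} (hW : IsStoch W) {δ : ℝ} (hδ₀ : 0 ≤ δ) (hδ₁ : δ < 1) (y₀ : β)
    (h : ∀ x, δ ≤ W x y₀) : IsConstMixture (1 - δ) W := by
  have hc : 0 < 1 - δ := sub_pos.2 hδ₁
  refine ⟨(1 - δ)⁻¹ • (W - replicateRow α (Pi.single y₀ δ)), Pi.single y₀ δ,
    fun x => ⟨fun y => ?_, ?_⟩, Pi.single_nonneg.2 hδ₀, ?_⟩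
  · simp only [Matrix.smul_apply, Matrix.sub_apply, replicateRow_apply, smul_eq_mul]
    refine mul_nonneg (inv_nonneg.2 hc.le) (sub_nonneg.2 ?_)
    rcases eq_or_ne y y₀ with rfl | hy
    · simpa using h x
    · simpa [hy] using (hW x).1 y
  · simp [Matrix.smul_apply, replicateRow_apply, ← Finset.mul_sum, Finset.sum_sub_distrib,
      (hW x).2, hc.ne']
  · rw [smul_smul, mul_inv_cancel₀ hc.ne', one_smul, sub_add_cancel]

theorem IsConstMixture.chain_const [Fintype α] [Fintype β] {c : ℝ} {T : Matrix α β ℝ}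
    {Φ : ℕ → Matrix β α ℝ} (hT : IsConstMixture c T) (hc : 0 ≤ c) (hΦ : ∀ ℓ, IsStoch (Φ ℓ))
    (n : ℕ) : IsConstMixture (c ^ (n + 1)) (chain (fun _ => T) Φ n) := by
  induction n with
  | zero => simpa [chain] using hT
  | succ n ih =>
    have h := (ih.mul (hΦ n).isConstMixture_one (by positivity) zero_le_one).mul hT
      (by positivity) hc
    rwa [mul_one, ← pow_succ] at h

theorem IsConstMixture.endToEnd {A Qi Qo : Type*} [Fintype A] [Fintype Qi] [Fintype Qo]
    {L M N : ℕ} {c : ℝ} {Q : Matrix Qi Qo ℝ} (hQ : IsConstMixture c (tensorPow N Q))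
    (hc : 0 ≤ c) {F : Matrix (Fin M → A) (Fin N → Qi) ℝ} (hF : IsStoch F)
    {Φ : ℕ → Matrix (Fin N → Qo) (Fin N → Qi) ℝ} (hΦ : ∀ ℓ, IsStoch (Φ ℓ)) (hL : 0 < L) :
    IsConstMixture (c ^ L) (endToEnd L M N F (fun _ => Q) Φ) := by
  have h := hF.isConstMixture_one.mul (hQ.chain_const hc hΦ (L - 1)) zero_le_one (by positivity)
  rwa [one_mul, Nat.sub_add_cancel hL] at h

theorem IsStoch.tensorPow [Fintype α] [Fintype β] {Q : Matrix α β ℝ} (hQ : IsStoch Q)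
    (N : ℕ) : IsStoch (tensorPow N Q) := by
  refine fun u => ⟨fun y => ?_, ?_⟩ <;> simp only [_root_.tensorPow, Matrix.of_apply]
  · exact Finset.prod_nonneg fun i _ => (hQ (u i)).1 (y i)
  rw [← Fintype.piFinset_univ, ← Finset.prod_univ_sum]
  simp [(hQ _).2]

section Erasure

variable {A : Type*} [DecidableEq A] {ε : ℝ}

theorem eraCh_isStoch [Fintype A] (hε₀ : 0 ≤ ε) (hε₁ : ε ≤ 1) : IsStoch (eraCh A ε) := by
  refine fun x => ⟨fun y => ?_, ?_⟩
  · rcases x with _ | a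
    · simp only [eraCh, Matrix.of_apply]; split_ifs <;> norm_num
    · simp only [eraCh, Matrix.of_apply]; split_ifs <;> linarith
  · rcases x with _ | a <;> simp [eraCh, Fintype.sum_option]

theorem pow_le_tensorPow_eraCh_apply_none [Fintype A] (hε₀ : 0 ≤ ε) (hε₁ : ε ≤ 1) {N : ℕ}
    (x : Fin N → Option A) : ε ^ N ≤ tensorPow N (eraCh A ε) x (fun _ => none) := by
  rw [← Fin.prod_const]
  refine Finset.prod_le_prod (fun _ _ => hε₀) fun i _ => ?_
  rcases x i with _ | a <;> simp [eraCh, hε₁]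

theorem isConstMixture_tensorPow_eraCh [Fintype A] (hε₀ : 0 ≤ ε) (hε₁ : ε < 1) {N : ℕ}
    (hN : N ≠ 0) : IsConstMixture (1 - ε ^ N) (tensorPow N (eraCh A ε)) :=
  ((eraCh_isStoch hε₀ hε₁.le).tensorPow N).isConstMixture_of_le_apply (pow_nonneg hε₀ N)
    (pow_lt_one₀ hε₀ hε₁ hN) _ (pow_le_tensorPow_eraCh_apply_none hε₀ hε₁.le)

end Erasure

section MutualInformation

variable {α β : Type*} [Fintype α] [Fintype β]

theorem IsDist.sum_negMulLog_le_log_card {q : β → ℝ} (hq : IsDist q) :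
    ∑ y, negMulLog (q y) ≤ log (Fintype.card β) := by
  obtain ⟨y, -, -⟩ := Finset.exists_ne_zero_of_sum_ne_zero (hq.2.trans_ne one_ne_zero)
  have hn : (0 : ℝ) < Fintype.card β := by
    have : Nonempty β := ⟨y⟩
    exact_mod_cast Fintype.card_pos
  have jensen := concaveOn_negMulLog.le_map_sum (t := Finset.univ)
    (w := fun _ => (Fintype.card β : ℝ)⁻¹) (p := q) (fun _ _ => by positivity)
    (by simp [hn.ne']) (fun y _ => hq.1 y)
  have uniform :
      negMulLog (Fintype.card β : ℝ)⁻¹ = (Fintype.card β : ℝ)⁻¹ * log (Fintype.card β) := by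
    simp [negMulLog, log_inv]
  simp only [smul_eq_mul, ← Finset.mul_sum, hq.2, mul_one, uniform] at jensen
  exact le_of_mul_le_mul_left jensen (inv_pos.2 hn)

noncomputable def mutualInfoNats (p : α → ℝ) (W : Matrix α β ℝ) : ℝ :=
  ∑ x, ∑ y, p x * W x y * log (W x y / (p ᵥ* W) y)

theorem mutualInfo_eq_mutualInfoNats_div (p : α → ℝ) (W : Matrix α β ℝ) :
    mutualInfo p W = mutualInfoNats p W / log 2 := by
  simp only [mutualInfo, mutualInfoNats, logb, Finset.sum_div, mul_div_assoc]
  rfl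

theorem mutualInfoNats_add_le {p : α → ℝ} {W₁ W₂ : Matrix α β ℝ} (hp : ∀ x, 0 ≤ p x)
    (h₁ : ∀ x y, 0 ≤ W₁ x y) (h₂ : ∀ x y, 0 ≤ W₂ x y) :
    mutualInfoNats p (W₁ + W₂) ≤ mutualInfoNats p W₁ + mutualInfoNats p W₂ := by
  simp only [mutualInfoNats, ← Finset.sum_add_distrib, Matrix.vecMul_add]
  refine Finset.sum_le_sum fun x _ => Finset.sum_le_sum fun y _ => ?_
  rcases (hp x).eq_or_lt with hx | hx
  · simp [← hx]
  have eq_zero_of_output : ∀ W : Matrix α β ℝ, (∀ x y, 0 ≤ W x y) → (p ᵥ* W) y = 0 → W x y = 0 :=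
    fun W hW h => (mul_eq_zero.1 (le_antisymm (h ▸ mul_le_vecMul_apply hp hW x y)
      (mul_nonneg (hp x) (hW x y)))).resolve_left hx.ne'
  have logSum := add_mul_log_div_add_le (h₁ x y) (h₂ x y) (vecMul_apply_nonneg hp h₁ y)
    (vecMul_apply_nonneg hp h₂ y) (eq_zero_of_output W₁ h₁) (eq_zero_of_output W₂ h₂)
  simp only [Matrix.add_apply, Pi.add_apply, mul_assoc, ← mul_add]
  gcongr

theorem mutualInfoNats_le_sum_negMulLog_input {p : α → ℝ} {W : Matrix α β ℝ} (hp : IsDist p)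
    (hW : IsStoch W) : mutualInfoNats p W ≤ ∑ x, negMulLog (p x) := by
  calc mutualInfoNats p W ≤ ∑ x, ∑ y, p x * W x y * -log (p x) := by
        refine Finset.sum_le_sum fun x _ => Finset.sum_le_sum fun y _ => ?_
        rcases (mul_nonneg (hp.1 x) ((hW x).1 y)).eq_or_lt with h | h
        · simp [← h]
        have hpx := pos_of_mul_pos_left h ((hW x).1 y)
        have hq := h.trans_le (mul_le_vecMul_apply hp.1 (fun x => (hW x).1) x y)
        refine mul_le_mul_of_nonneg_left ?_ h.le
        rw [← log_inv]
        refine log_le_log (div_pos (pos_of_mul_pos_right h hpx.le) hq) ?_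
        rw [div_le_iff₀ hq, inv_mul_eq_div, le_div_iff₀ hpx, mul_comm]
        exact mul_le_vecMul_apply hp.1 (fun x => (hW x).1) x y
    _ = ∑ x, negMulLog (p x) := by
        refine Finset.sum_congr rfl fun x _ => ?_
        rw [← Finset.sum_mul, ← Finset.mul_sum, (hW x).2, negMulLog]
        ring

theorem mutualInfoNats_le_sum_negMulLog_output {p : α → ℝ} {W : Matrix α β ℝ} (hp : IsDist p)
    (hW : IsStoch W) : mutualInfoNats p W ≤ ∑ y, negMulLog ((p ᵥ* W) y) := by
  calc mutualInfoNats p W ≤ ∑ x, ∑ y, p x * W x y * -log ((p ᵥ* W) y) := by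
        refine Finset.sum_le_sum fun x _ => Finset.sum_le_sum fun y _ => ?_
        rcases (mul_nonneg (hp.1 x) ((hW x).1 y)).eq_or_lt with h | h
        · simp [← h]
        have hWxy := pos_of_mul_pos_right h (hp.1 x)
        have hq := h.trans_le (mul_le_vecMul_apply hp.1 (fun x => (hW x).1) x y)
        refine mul_le_mul_of_nonneg_left ?_ h.le
        rw [log_div hWxy.ne' hq.ne']
        linarith [log_nonpos hWxy.le (hW.le_one x y)]
    _ = ∑ y, negMulLog ((p ᵥ* W) y) := by
        rw [Finset.sum_comm]
        refine Finset.sum_congr rfl fun y _ => ?_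
        rw [← Finset.sum_mul, negMulLog]
        exact (mul_neg _ _).trans (neg_mul _ _).symm

theorem mutualInfo_add_le {p : α → ℝ} {W₁ W₂ : Matrix α β ℝ} (hp : ∀ x, 0 ≤ p x)
    (h₁ : ∀ x y, 0 ≤ W₁ x y) (h₂ : ∀ x y, 0 ≤ W₂ x y) :
    mutualInfo p (W₁ + W₂) ≤ mutualInfo p W₁ + mutualInfo p W₂ := by
  simp only [mutualInfo_eq_mutualInfoNats_div, ← add_div]
  gcongr
  exact mutualInfoNats_add_le hp h₁ h₂

theorem mutualInfo_le_logb_card_input {p : α → ℝ} {W : Matrix α β ℝ} (hp : IsDist p)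
    (hW : IsStoch W) : mutualInfo p W ≤ logb 2 (Fintype.card α) := by
  rw [mutualInfo_eq_mutualInfoNats_div, logb]
  gcongr
  exact (mutualInfoNats_le_sum_negMulLog_input hp hW).trans hp.sum_negMulLog_le_log_card

theorem mutualInfo_le_logb_card_output {p : α → ℝ} {W : Matrix α β ℝ} (hp : IsDist p)
    (hW : IsStoch W) : mutualInfo p W ≤ logb 2 (Fintype.card β) := by
  rw [mutualInfo_eq_mutualInfoNats_div, logb]
  gcongr
  exact (mutualInfoNats_le_sum_negMulLog_output hp hW).trans
    (hp.vecMul hW).sum_negMulLog_le_log_card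

theorem mutualInfo_smul (p : α → ℝ) (s : ℝ) (W : Matrix α β ℝ) :
    mutualInfo p (s • W) = s * mutualInfo p W := by
  rcases eq_or_ne s 0 with rfl | hs
  · simp [mutualInfo]
  simp only [mutualInfo, Finset.mul_sum]
  refine Finset.sum_congr rfl fun x _ => Finset.sum_congr rfl fun y _ => ?_
  have output : ∑ x', p x' * (s • W) x' y = s * ∑ x', p x' * W x' y := by
    simp only [Finset.mul_sum, Matrix.smul_apply, smul_eq_mul, mul_left_comm]
  rw [output, Matrix.smul_apply, smul_eq_mul, mul_div_mul_left _ _ hs]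
  ring

theorem mutualInfo_replicateRow {p : α → ℝ} (hp : ∑ x, p x = 1) (r : β → ℝ) :
    mutualInfo p (replicateRow α r) = 0 := by
  refine Finset.sum_eq_zero fun x _ => Finset.sum_eq_zero fun y _ => ?_
  simp only [replicateRow_apply, ← Finset.sum_mul, hp, one_mul]
  rcases eq_or_ne (r y) 0 with h | h <;> simp [h]

theorem IsConstMixture.mutualInfo_le {p : α → ℝ} {t : ℝ} {W : Matrix α β ℝ}
    (hW : IsConstMixture t W) (hp : IsDist p) (ht : 0 ≤ t) :
    mutualInfo p W ≤ t * min (logb 2 (Fintype.card α)) (logb 2 (Fintype.card β)) := by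
  obtain ⟨G, r, hG, hr, rfl⟩ := hW
  calc mutualInfo p (t • G + replicateRow α r)
      ≤ mutualInfo p (t • G) + mutualInfo p (replicateRow α r) :=
        mutualInfo_add_le hp.1 (fun x y => mul_nonneg ht ((hG x).1 y)) fun _ y => hr y
    _ = t * mutualInfo p G := by rw [mutualInfo_smul, mutualInfo_replicateRow hp.2, add_zero]
    _ ≤ t * min (logb 2 (Fintype.card α)) (logb 2 (Fintype.card β)) :=
        mul_le_mul_of_nonneg_left
          (le_min (mutualInfo_le_logb_card_input hp hG) (mutualInfo_le_logb_card_output hp hG)) ht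

end MutualInformation

end

theorem stmt2_general {A : Type} [Fintype A] [DecidableEq A]
    (ε : ℝ) (hε : 0 < ε) (hε1 : ε < 1)
    (L M N : ℕ) (hL : 0 < L) (hN : 0 < N)
    (F : Matrix (Fin M → A) (Fin N → Option A) ℝ) (hF : IsStoch F)
    (Φ : ℕ → Matrix (Fin N → Option A) (Fin N → Option A) ℝ) (hΦ : ∀ ℓ, IsStoch (Φ ℓ))
    (p : (Fin M → A) → ℝ) (hp : IsDist p) :
    (1 / (N : ℝ)) * mutualInfo p (endToEnd L M N F (fun _ => eraCh A ε) Φ)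
      ≤ ((1 - ε ^ N) ^ L / (N : ℝ)) *
          min ((M : ℝ) * Real.logb 2 (Fintype.card A))
              ((N : ℝ) * Real.logb 2 (Fintype.card (Option A))) := by
  have hc : 0 ≤ 1 - ε ^ N := sub_nonneg.2 (pow_le_one₀ hε.le hε1.le)
  have hW := (isConstMixture_tensorPow_eraCh hε.le hε1 hN.ne').endToEnd hc hF hΦ hL
  have hI := hW.mutualInfo_le hp (pow_nonneg hc L)
  simp only [Fintype.card_fun, Fintype.card_fin, Nat.cast_pow, logb_pow] at hI
  rw [one_div_mul_eq_div, div_mul_eq_mul_div]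
  gcongr

/-- For a line network of length `L` of identical packet erasure
channels with erasure probability `ε`, the batched-code capacity with batch size `M`
and inner block-length `N` satisfies
`C_L(M,N) ≤ ((1-ε^N)^L / N) · min{M log|A|, N log|Option A|}`:
every batched code's rate obeys this bound. -/
theorem stmt2 {A : Type} [Fintype A] [DecidableEq A] (hA : 2 ≤ Fintype.card A)
    (ε : ℝ) (hε : 0 < ε) (hε1 : ε < 1)
    (L M N : ℕ) (hL : 0 < L) (hM : 0 < M) (hN : 0 < N)
    (F : Matrix (Fin M → A) (Fin N → Option A) ℝ) (hF : IsStoch F)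
    (Φ : ℕ → Matrix (Fin N → Option A) (Fin N → Option A) ℝ) (hΦ : ∀ ℓ, IsStoch (Φ ℓ))
    (p : (Fin M → A) → ℝ) (hp : IsDist p) :
    (1 / (N : ℝ)) * mutualInfo p (endToEnd L M N F (fun _ => eraCh A ε) Φ)
      ≤ ((1 - ε ^ N) ^ L / (N : ℝ)) *
          min ((M : ℝ) * Real.logb 2 (Fintype.card A))
              ((N : ℝ) * Real.logb 2 (Fintype.card (Option A))) :=
  stmt2_general ε hε hε1 L M N hL hN F hF Φ hΦ p hp
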